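/- Let d = 2, let x_1,…,x_N be pairwise distinct points in ℝ² with particle volumes V_1,…,V_N > 0, let w be a reference weight function, h > 0, ρ > 0, Δt > 0, c₀ > 0. Assume the semi-regularity condition max_i Σ_{j=1}^N V_j |x_i − x_j| |ẇ_h(|x_i − x_j|)| ≤ 2 + c₀ Δt. Let Λ = Λ_fl ∪ Λ_sf ⊆ {1,…,N} (disjoint union), let u* : Λ → ℝ², let p : Λ → ℝ satisfy p_i = 0 for i ∈ Λ_sf and (Δp)_i = (ρ/Δt)(∇·u*)_i for i ∈ Λ_fl (operators over Λ), and define the corrected velocity u_i := u*_i − (Δt/ρ)(∇p)_i for i ∈ Λ. Then ‖u‖_{2,Λ}² ≤ (1 + c₀(2 + c₀Δt)Δt) ‖u*‖_{2,Λ}². -/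

import Mathlib

open MeasureTheory Finset
open scoped BigOperators RealInnerProductSpace

noncomputable section

namespace ISPH

/-- Points of `ℝ^d`. -/
abbrev Pt (d : ℕ) := EuclideanSpace ℝ (Fin d)

/-- A reference weight function for dimension `d` with support radius `r₀`. -/
structure IsRefWeight (d : ℕ) (w : ℝ → ℝ) (r₀ : ℝ) : Prop where
  r0_pos : 0 < r₀
  smooth : ContDiffOn ℝ 2 w (Set.Ici 0)
  pos : ∀ r : ℝ, 0 < r → r < r₀ → 0 < w r
  eq_zero : ∀ r : ℝ, r₀ ≤ r → w r = 0
  deriv_neg : ∀ r : ℝ, 0 < r → r < r₀ → deriv w r < 0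
  deriv_zero : deriv w 0 = 0
  deriv_eq_zero : ∀ r : ℝ, r₀ ≤ r → deriv w r = 0
  unity : (∫ y : Pt d, w ‖y‖) = 1

/-- The scaled weight function `w_h`. -/
def wh (d : ℕ) (h : ℝ) (w : ℝ → ℝ) : ℝ → ℝ := fun r => (h ^ d)⁻¹ * w (r / h)

/-- `ẇ_h`, the derivative of the scaled weight function. -/
def dwh (d : ℕ) (h : ℝ) (w : ℝ → ℝ) : ℝ → ℝ := deriv (wh d h w)

variable {d N : ℕ}

/-- `∇w_h(|x i − x j|)`; equal to `0` when `i = j`. -/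
def gradW (x : Fin N → Pt d) (dw : ℝ → ℝ) (i j : Fin N) : Pt d :=
  (dw ‖x i - x j‖ / ‖x i - x j‖) • (x i - x j)

/-- `C i j = −2 ẇ_h(|x_i − x_j|)/|x_i − x_j|` off the diagonal, `0` on it. -/
def Cmat (x : Fin N → Pt d) (dw : ℝ → ℝ) (i j : Fin N) : ℝ :=
  if i = j then 0 else -2 * dw ‖x i - x j‖ / ‖x i - x j‖

/-- Discrete divergence over `Λ`. -/
def dDiv (x : Fin N → Pt d) (V : Fin N → ℝ) (dw : ℝ → ℝ) (Λ : Finset (Fin N))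
    (φ : Fin N → Pt d) (i : Fin N) : ℝ :=
  ∑ j ∈ Λ, V j * ⟪φ j + φ i, gradW x dw i j⟫

/-- Discrete gradient over `Λ`. -/
def dGrad (x : Fin N → Pt d) (V : Fin N → ℝ) (dw : ℝ → ℝ) (Λ : Finset (Fin N))
    (ψ : Fin N → ℝ) (i : Fin N) : Pt d :=
  ∑ j ∈ Λ, (V j * (ψ j - ψ i)) • gradW x dw i j

/-- Discrete Laplacian over `Λ` (for scalar- or vector-valued functions). -/
def dLap {F : Type*} [NormedAddCommGroup F] [NormedSpace ℝ F]
    (x : Fin N → Pt d) (V : Fin N → ℝ) (dw : ℝ → ℝ) (Λ : Finset (Fin N))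
    (φ : Fin N → F) (i : Fin N) : F :=
  (2 : ℝ) • ∑ j ∈ Λ.erase i,
    ((V j / ‖x i - x j‖) * ⟪‖x i - x j‖⁻¹ • (x i - x j), gradW x dw i j⟫) • (φ i - φ j)

/-- Discrete inner product over `Λ`. -/
def dInner {F : Type*} [NormedAddCommGroup F] [InnerProductSpace ℝ F]
    (V : Fin N → ℝ) (Λ : Finset (Fin N)) (φ ψ : Fin N → F) : ℝ :=
  ∑ i ∈ Λ, V i * ⟪φ i, ψ i⟫

/-- Square of the discrete `L²` norm over `Λ`. -/
def l2normSq {F : Type*} [NormedAddCommGroup F]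
    (V : Fin N → ℝ) (Λ : Finset (Fin N)) (φ : Fin N → F) : ℝ :=
  ∑ i ∈ Λ, V i * ‖φ i‖ ^ 2

/-- Discrete `L²` norm over `Λ`. -/
def l2norm {F : Type*} [NormedAddCommGroup F]
    (V : Fin N → ℝ) (Λ : Finset (Fin N)) (φ : Fin N → F) : ℝ :=
  Real.sqrt (l2normSq V Λ φ)

/-- Square of the discrete `H¹₀` seminorm over `Λ`. -/
def h1semiSq {F : Type*} [NormedAddCommGroup F]
    (x : Fin N → Pt d) (V : Fin N → ℝ) (dw : ℝ → ℝ) (Λ : Finset (Fin N))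
    (φ : Fin N → F) : ℝ :=
  ∑ i ∈ Λ, V i * ∑ j ∈ Λ.erase i,
    V j * (‖φ i - φ j‖ ^ 2 / ‖x i - x j‖) * |dw ‖x i - x j‖|

/-- Discrete `H¹₀` seminorm over `Λ`. -/
def h1semi {F : Type*} [NormedAddCommGroup F]
    (x : Fin N → Pt d) (V : Fin N → ℝ) (dw : ℝ → ℝ) (Λ : Finset (Fin N))
    (φ : Fin N → F) : ℝ :=
  Real.sqrt (h1semiSq x V dw Λ φ)

/-- Discrete `H₀⁻¹` seminorm over `Λ`. -/
def hm1semi {F : Type*} [NormedAddCommGroup F] [InnerProductSpace ℝ F]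
    (x : Fin N → Pt d) (V : Fin N → ℝ) (dw : ℝ → ℝ) (Λ : Finset (Fin N))
    (φ : Fin N → F) : ℝ :=
  sSup { r : ℝ | ∃ χ : Fin N → F, h1semi x V dw Λ χ ≠ 0 ∧
    r = dInner V Λ φ χ / h1semi x V dw Λ χ }

/-- There is a chain from `i` ending in `target`, with all indices before the last
one in `inter`, and consecutive distances strictly between `0` and `R`. -/
def Chain (x : Fin N → Pt d) (R : ℝ) (inter target : Finset (Fin N)) (i : Fin N) : Prop :=
  ∃ (ζ : ℕ) (c : ℕ → Fin N), c 0 = i ∧ (∀ l < ζ, c l ∈ inter) ∧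
    (∀ l < ζ, 0 < ‖x (c l) - x (c (l + 1))‖ ∧ ‖x (c l) - x (c (l + 1))‖ < R) ∧
    c ζ ∈ target

end ISPH

open ISPH

/-! Write `c = Δt / ρ`, `g = ∇p` and `E` for the squared discrete `H¹` seminorm of `p`.
Summation by parts turns `⟨g, u*⟩` into `-Σ Vᵢ pᵢ (∇·u*)ᵢ`; since `p` vanishes on `Λ_sf`, the
Poisson equation and the discrete Green identity make this `c E`. Cauchy–Schwarz together with
the semi-regularity bound gives `‖g‖² ≤ (2 + c₀Δt) E`, and then `(c E)² ≤ ‖g‖² ‖u*‖²` yields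
`c² E ≤ (2 + c₀Δt) ‖u*‖²`. Expanding `‖u* - c g‖² = ‖u*‖² - 2c²E + c²‖g‖² ≤ ‖u*‖² + c₀Δt c²E`
concludes. -/

namespace ISPH

section DoubleSums

variable {ι : Type*} (s : Finset ι)

theorem sum_sum_eq_zero_of_antisymm (f : ι → ι → ℝ) (hf : ∀ i j, f j i = -f i j) :
    ∑ i ∈ s, ∑ j ∈ s, f i j = 0 := by
  have h : ∑ i ∈ s, ∑ j ∈ s, f i j = -∑ i ∈ s, ∑ j ∈ s, f i j := by
    conv_lhs => rw [sum_comm]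
    simp only [← sum_neg_distrib]
    exact sum_congr rfl fun a _ => sum_congr rfl fun b _ => hf a b
  linarith

theorem two_mul_sum_sum_mul_sub_eq (K : ι → ι → ℝ) (hK : ∀ i j, K j i = K i j) (p : ι → ℝ) :
    2 * ∑ i ∈ s, ∑ j ∈ s, K i j * p i * (p i - p j) =
      ∑ i ∈ s, ∑ j ∈ s, K i j * (p i - p j) ^ 2 := by
  have hanti := sum_sum_eq_zero_of_antisymm s (fun i j => K i j * (p i ^ 2 - p j ^ 2))
    fun i j => by rw [hK]; ring
  rw [← sub_eq_zero, ← hanti, mul_sum, ← sum_sub_distrib]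
  refine sum_congr rfl fun i _ => ?_
  rw [mul_sum, ← sum_sub_distrib]
  exact sum_congr rfl fun j _ => by ring

end DoubleSums

theorem dwh_nonpos {d : ℕ} {w : ℝ → ℝ} {r₀ : ℝ} (hw : IsRefWeight d w r₀) {h : ℝ} (hh : 0 < h)
    {r : ℝ} (hr : 0 < r) : dwh d h w r ≤ 0 := by
  have hrh : 0 < r / h := div_pos hr hh
  have hdiff : DifferentiableAt ℝ w (r / h) :=
    (hw.smooth.contDiffAt (Ici_mem_nhds hrh)).differentiableAt two_ne_zero
  have hderiv : HasDerivAt (fun s => w (s / h)) (deriv w (r / h) * (1 / h)) r :=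
    hdiff.hasDerivAt.comp r (by simpa using (hasDerivAt_id r).div_const h)
  have hw' : deriv w (r / h) ≤ 0 := by
    rcases lt_or_ge (r / h) r₀ with hlt | hge
    · exact (hw.deriv_neg _ hrh hlt).le
    · exact (hw.deriv_eq_zero _ hge).le
  unfold dwh wh
  rw [deriv_const_mul_field, hderiv.deriv]
  exact mul_nonpos_of_nonneg_of_nonpos (by positivity)
    (mul_nonpos_of_nonpos_of_nonneg hw' (by positivity))

section Operators

variable {d N : ℕ} (x : Fin N → Pt d) (V : Fin N → ℝ) (dw : ℝ → ℝ) (Λ : Finset (Fin N))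

theorem gradW_swap (i j : Fin N) : gradW x dw j i = -gradW x dw i j := by
  rw [gradW, gradW, norm_sub_rev, ← neg_sub (x i) (x j), smul_neg]

theorem norm_gradW (i j : Fin N) :
    ‖gradW x dw i j‖ = |dw ‖x i - x j‖| / ‖x i - x j‖ * ‖x i - x j‖ := by
  rw [gradW, norm_smul, Real.norm_eq_abs, abs_div, abs_norm]

theorem dLap_eq_sum (p : Fin N → ℝ) (i : Fin N) :
    dLap x V dw Λ p i = 2 * ∑ j ∈ Λ, V j * (dw ‖x i - x j‖ / ‖x i - x j‖) * (p i - p j) := by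
  rw [dLap, smul_eq_mul, sum_erase _ (by simp)]
  congr 1
  refine sum_congr rfl fun j _ => ?_
  rw [smul_eq_mul, gradW, real_inner_smul_left, real_inner_smul_right,
    real_inner_self_eq_norm_sq]
  rcases eq_or_ne ‖x i - x j‖ 0 with hr | hr
  · simp [hr]
  · field_simp

theorem sum_mul_dLap_eq_neg_h1semiSq (hdw : ∀ r, 0 < r → dw r ≤ 0) (p : Fin N → ℝ) :
    ∑ i ∈ Λ, V i * p i * dLap x V dw Λ p i = -h1semiSq x V dw Λ p := by
  set K : Fin N → Fin N → ℝ := fun i j => V i * V j * (dw ‖x i - x j‖ / ‖x i - x j‖)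
  have hK : ∀ i j, K j i = K i j := fun i j => by simp only [K, norm_sub_rev (x j)]; ring
  have habs : ∀ i j, |dw ‖x i - x j‖| / ‖x i - x j‖ = -(dw ‖x i - x j‖ / ‖x i - x j‖) := by
    intro i j
    rcases (norm_nonneg (x i - x j)).eq_or_lt with hr | hr
    · simp [← hr]
    · rw [abs_of_nonpos (hdw _ hr), neg_div]
  have hlap : ∑ i ∈ Λ, V i * p i * dLap x V dw Λ p i =
      2 * ∑ i ∈ Λ, ∑ j ∈ Λ, K i j * p i * (p i - p j) := by
    simp only [dLap_eq_sum, mul_sum]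
    exact sum_congr rfl fun i _ => sum_congr rfl fun j _ => by ring
  have hh1 : h1semiSq x V dw Λ p = -∑ i ∈ Λ, ∑ j ∈ Λ, K i j * (p i - p j) ^ 2 := by
    simp only [h1semiSq, mul_sum, ← sum_neg_distrib]
    refine sum_congr rfl fun i _ => ?_
    rw [sum_erase _ (by simp)]
    refine sum_congr rfl fun j _ => ?_
    rw [show V i * (V j * (‖p i - p j‖ ^ 2 / ‖x i - x j‖) * |dw ‖x i - x j‖|) =
        V i * V j * (p i - p j) ^ 2 * (|dw ‖x i - x j‖| / ‖x i - x j‖) by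
      rw [Real.norm_eq_abs, sq_abs]; ring, habs]
    ring
  rw [hlap, hh1, two_mul_sum_sum_mul_sub_eq Λ K hK, neg_neg]

theorem dInner_dGrad_eq_neg_sum_mul_dDiv (p : Fin N → ℝ) (φ : Fin N → Pt d) :
    dInner V Λ (dGrad x V dw Λ p) φ = -∑ i ∈ Λ, V i * p i * dDiv x V dw Λ φ i := by
  rw [eq_neg_iff_add_eq_zero]
  simp only [dInner, dGrad, dDiv, sum_inner, real_inner_smul_left, mul_sum,
    ← sum_add_distrib]
  refine sum_sum_eq_zero_of_antisymm Λ _ fun i j => ?_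
  simp only [gradW_swap x dw i j, inner_neg_left, inner_neg_right, inner_add_right,
    real_inner_comm (gradW x dw i j)]
  ring_nf

theorem dInner_dGrad_eq_of_poisson (hdw : ∀ r, 0 < r → dw r ≤ 0) {Λfl Λsf : Finset (Fin N)}
    (p : Fin N → ℝ) (hpsf : ∀ i ∈ Λsf, p i = 0) (φ : Fin N → Pt d) {a : ℝ} (ha : a ≠ 0)
    (hpois : ∀ i ∈ Λfl, dLap x V dw (Λfl ∪ Λsf) p i = a * dDiv x V dw (Λfl ∪ Λsf) φ i) :
    dInner V (Λfl ∪ Λsf) (dGrad x V dw (Λfl ∪ Λsf) p) φ = a⁻¹ * h1semiSq x V dw (Λfl ∪ Λsf) p := by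
  have hfl : ∀ f : Fin N → ℝ, ∑ i ∈ Λfl ∪ Λsf, V i * p i * f i = ∑ i ∈ Λfl, V i * p i * f i := by
    intro f
    refine (sum_subset subset_union_left fun i hi hnfl => ?_).symm
    rw [hpsf i ((mem_union.mp hi).resolve_left hnfl), mul_zero, zero_mul]
  have hdiv : ∑ i ∈ Λfl, V i * p i * dDiv x V dw (Λfl ∪ Λsf) φ i =
      a⁻¹ * ∑ i ∈ Λfl, V i * p i * dLap x V dw (Λfl ∪ Λsf) p i := by
    rw [mul_sum]
    refine sum_congr rfl fun i hi => ?_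
    rw [hpois i hi]
    field_simp
  rw [dInner_dGrad_eq_neg_sum_mul_dDiv, hfl, hdiv, ← hfl, sum_mul_dLap_eq_neg_h1semiSq x V dw _ hdw]
  ring

variable {V}

theorem h1semiSq_nonneg (hV : ∀ i, 0 ≤ V i) (p : Fin N → ℝ) : 0 ≤ h1semiSq x V dw Λ p :=
  sum_nonneg fun i _ => mul_nonneg (hV i) <| sum_nonneg fun j _ =>
    mul_nonneg (mul_nonneg (hV j) (div_nonneg (sq_nonneg _) (norm_nonneg _))) (abs_nonneg _)

theorem l2normSq_dGrad_le (hV : ∀ i, 0 ≤ V i) (p : Fin N → ℝ) {B : ℝ}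
    (hB : ∀ i, ∑ j : Fin N, V j * ‖x i - x j‖ * |dw ‖x i - x j‖| ≤ B) :
    l2normSq V Λ (dGrad x V dw Λ p) ≤ B * h1semiSq x V dw Λ p := by
  rw [h1semiSq, mul_sum]
  refine sum_le_sum fun i _ => ?_
  set f : Fin N → ℝ := fun j => V j * (‖p i - p j‖ ^ 2 / ‖x i - x j‖) * |dw ‖x i - x j‖|
  set g : Fin N → ℝ := fun j => V j * ‖x i - x j‖ * |dw ‖x i - x j‖|
  have hf : ∀ j, 0 ≤ f j := fun j =>
    mul_nonneg (mul_nonneg (hV j) (div_nonneg (sq_nonneg _) (norm_nonneg _))) (abs_nonneg _)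
  have hg : ∀ j, 0 ≤ g j := fun j => mul_nonneg (mul_nonneg (hV j) (norm_nonneg _)) (abs_nonneg _)
  have hterm : ∀ j, ‖(V j * (p j - p i)) • gradW x dw i j‖ ^ 2 ≤ f j * g j := by
    intro j
    rw [norm_smul, norm_gradW, Real.norm_eq_abs, abs_mul, abs_sub_comm (p j)]
    rcases eq_or_ne ‖x i - x j‖ 0 with hr | hr
    · simp [f, g, hr]
    · apply le_of_eq
      simp only [f, g, Real.norm_eq_abs, sq_abs, abs_of_nonneg (hV j)]
      field_simp
      simp only [sq_abs]
  have hgB : ∑ j ∈ Λ, g j ≤ B := (sum_le_sum_of_subset_of_nonneg (subset_univ Λ)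
    fun j _ _ => hg j).trans (hB i)
  calc V i * ‖dGrad x V dw Λ p i‖ ^ 2
      ≤ V i * (∑ j ∈ Λ, ‖(V j * (p j - p i)) • gradW x dw i j‖) ^ 2 := by
        gcongr
        · exact hV i
        · exact norm_sum_le _ _
    _ ≤ V i * ((∑ j ∈ Λ, f j) * ∑ j ∈ Λ, g j) := by
        gcongr
        · exact hV i
        · exact sum_sq_le_sum_mul_sum_of_sq_le_mul Λ (fun j _ => hf j) (fun j _ => hg j)
            fun j _ => hterm j
    _ ≤ V i * ((∑ j ∈ Λ, f j) * B) := by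
        gcongr
        · exact hV i
        · exact sum_nonneg fun j _ => hf j
    _ = B * (V i * ∑ j ∈ Λ.erase i, f j) := by
        rw [sum_erase _ (by simp [f])]
        ring

end Operators

section InnerProduct

variable {N : ℕ} {F : Type*} [NormedAddCommGroup F] {V : Fin N → ℝ} (Λ : Finset (Fin N))

theorem l2normSq_nonneg (hV : ∀ i, 0 ≤ V i) (φ : Fin N → F) : 0 ≤ l2normSq V Λ φ :=
  sum_nonneg fun i _ => mul_nonneg (hV i) (sq_nonneg _)

variable [InnerProductSpace ℝ F]

theorem dInner_sq_le (hV : ∀ i, 0 ≤ V i) (φ ψ : Fin N → F) :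
    dInner V Λ φ ψ ^ 2 ≤ l2normSq V Λ φ * l2normSq V Λ ψ := by
  refine sum_sq_le_sum_mul_sum_of_sq_le_mul Λ
    (fun i _ => mul_nonneg (hV i) (sq_nonneg _)) (fun i _ => mul_nonneg (hV i) (sq_nonneg _))
    fun i _ => ?_
  have hcs : ⟪φ i, ψ i⟫ ^ 2 ≤ (‖φ i‖ * ‖ψ i‖) ^ 2 := by
    rw [← sq_abs]
    exact pow_le_pow_left₀ (abs_nonneg _) (abs_real_inner_le_norm _ _) 2
  calc (V i * ⟪φ i, ψ i⟫) ^ 2 = V i ^ 2 * ⟪φ i, ψ i⟫ ^ 2 := mul_pow _ _ _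
    _ ≤ V i ^ 2 * (‖φ i‖ * ‖ψ i‖) ^ 2 := by gcongr
    _ = V i * ‖φ i‖ ^ 2 * (V i * ‖ψ i‖ ^ 2) := by ring

theorem l2normSq_sub_smul (φ ψ : Fin N → F) (c : ℝ) :
    l2normSq V Λ (fun i => φ i - c • ψ i) =
      l2normSq V Λ φ - 2 * c * dInner V Λ ψ φ + c ^ 2 * l2normSq V Λ ψ := by
  simp only [l2normSq, dInner, mul_sum, ← sum_sub_distrib, ← sum_add_distrib]
  refine sum_congr rfl fun i _ => ?_
  rw [norm_sub_sq_real, real_inner_smul_right, norm_smul, mul_pow, Real.norm_eq_abs, sq_abs,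
    real_inner_comm]
  ring

end InnerProduct

theorem sub_add_le_of_sq_le_mul {U E G c β : ℝ} (hβ : 0 ≤ β) (hE : 0 ≤ E) (hU : 0 ≤ U)
    (hG : G ≤ (2 + β) * E) (hCS : (c * E) ^ 2 ≤ G * U) :
    U - 2 * c * (c * E) + c ^ 2 * G ≤ (1 + β * (2 + β)) * U := by
  have hcE : c ^ 2 * E ≤ (2 + β) * U := by
    rcases hE.eq_or_lt with hE0 | hEpos
    · rw [← hE0, mul_zero]; positivity
    · refine le_of_mul_le_mul_right ?_ hEpos
      calc c ^ 2 * E * E = (c * E) ^ 2 := by ring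
        _ ≤ G * U := hCS
        _ ≤ (2 + β) * E * U := by gcongr
        _ = (2 + β) * U * E := by ring
  nlinarith [mul_le_mul_of_nonneg_left hG (sq_nonneg c), mul_le_mul_of_nonneg_left hcE hβ]

end ISPH

theorem statement10_general (N : ℕ)
    (x : Fin N → Pt 2)
    (V : Fin N → ℝ) (hV : ∀ i, 0 < V i)
    (w : ℝ → ℝ) (r₀ : ℝ) (hw : IsRefWeight 2 w r₀)
    (h : ℝ) (hh : 0 < h) (ρ Δt c₀ : ℝ) (hρ : 0 < ρ) (hΔt : 0 < Δt) (hc₀ : 0 < c₀)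
    (hreg : ∀ i, ∑ j : Fin N,
      V j * ‖x i - x j‖ * |dwh 2 h w ‖x i - x j‖| ≤ 2 + c₀ * Δt)
    (Λfl Λsf : Finset (Fin N))
    (ustar u : Fin N → Pt 2) (p : Fin N → ℝ)
    (hpsf : ∀ i ∈ Λsf, p i = 0)
    (hpois : ∀ i ∈ Λfl, dLap x V (dwh 2 h w) (Λfl ∪ Λsf) p i =
      (ρ / Δt) * dDiv x V (dwh 2 h w) (Λfl ∪ Λsf) ustar i)
    (hu : ∀ i ∈ Λfl ∪ Λsf,
      u i = ustar i - (Δt / ρ) • dGrad x V (dwh 2 h w) (Λfl ∪ Λsf) p i) :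
    l2normSq V (Λfl ∪ Λsf) u ≤
      (1 + c₀ * (2 + c₀ * Δt) * Δt) * l2normSq V (Λfl ∪ Λsf) ustar := by
  have hV' : ∀ i, 0 ≤ V i := fun i => (hV i).le
  have hdw : ∀ r, 0 < r → dwh 2 h w r ≤ 0 := fun r hr => dwh_nonpos hw hh hr
  have hinner := dInner_dGrad_eq_of_poisson x V _ hdw p hpsf ustar (by positivity) hpois
  rw [inv_div] at hinner
  have hu' : l2normSq V (Λfl ∪ Λsf) u = l2normSq V (Λfl ∪ Λsf)
      (fun i => ustar i - (Δt / ρ) • dGrad x V (dwh 2 h w) (Λfl ∪ Λsf) p i) :=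
    sum_congr rfl fun i hi => by rw [hu i hi]
  rw [hu', l2normSq_sub_smul, hinner]
  calc _ ≤ (1 + c₀ * Δt * (2 + c₀ * Δt)) * l2normSq V (Λfl ∪ Λsf) ustar :=
        sub_add_le_of_sq_le_mul (by positivity) (h1semiSq_nonneg x _ _ hV' p)
          (l2normSq_nonneg _ hV' ustar) (l2normSq_dGrad_le x _ _ hV' p hreg)
          (hinner ▸ dInner_sq_le _ hV' _ ustar)
    _ = _ := by ring

/-- under the semi-regularity condition (d = 2), the corrected velocity
of the ISPH projection step is bounded in the discrete `L²` norm by the predicted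
velocity. -/
theorem statement10 (N : ℕ)
    (x : Fin N → Pt 2) (hx : Function.Injective x)
    (V : Fin N → ℝ) (hV : ∀ i, 0 < V i)
    (w : ℝ → ℝ) (r₀ : ℝ) (hw : IsRefWeight 2 w r₀)
    (h : ℝ) (hh : 0 < h) (ρ Δt c₀ : ℝ) (hρ : 0 < ρ) (hΔt : 0 < Δt) (hc₀ : 0 < c₀)
    (hreg : ∀ i, ∑ j : Fin N,
      V j * ‖x i - x j‖ * |dwh 2 h w ‖x i - x j‖| ≤ 2 + c₀ * Δt)
    (Λfl Λsf : Finset (Fin N)) (hdisj : Disjoint Λfl Λsf)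
    (ustar u : Fin N → Pt 2) (p : Fin N → ℝ)
    (hpsf : ∀ i ∈ Λsf, p i = 0)
    (hpois : ∀ i ∈ Λfl, dLap x V (dwh 2 h w) (Λfl ∪ Λsf) p i =
      (ρ / Δt) * dDiv x V (dwh 2 h w) (Λfl ∪ Λsf) ustar i)
    (hu : ∀ i ∈ Λfl ∪ Λsf,
      u i = ustar i - (Δt / ρ) • dGrad x V (dwh 2 h w) (Λfl ∪ Λsf) p i) :
    l2normSq V (Λfl ∪ Λsf) u ≤
      (1 + c₀ * (2 + c₀ * Δt) * Δt) * l2normSq V (Λfl ∪ Λsf) ustar :=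
  statement10_general N x V hV w r₀ hw h hh ρ Δt c₀ hρ hΔt hc₀ hreg Λfl Λsf ustar u p hpsf hpois hu
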